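/- Let b ≥ 2 and let T be a tree of maximum degree b+2 rooted at a vertex s of degree at most b+1. If T is not a complete tree (i.e., some internal vertex has fewer than b+1 children, or some internal non-root vertex has degree at most b+1), then there is a valid firefighting strategy with b firefighters per time step, with the fire starting at s, that saves all leaves of T. -/

import Mathlib

/-! Take a vertex `v` witnessing that the tree is not complete and direct the fire along the path
from `s` to `v`, protecting at step `j + 1` the neighbours of its `j`-th vertex that lie off the
path. In a tree the fire needs `j` steps to reach the `j`-th vertex of that path, so it never
leaves the path; the interior vertices of the path have degree at least 2 and its end `v` is
internal, so no leaf burns. The budget suffices because interior vertices have two path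
neighbours and degree at most `b + 2`, the two ends have one path neighbour and degree at most
`b + 1`, and if `v = s` the root has degree at most `b`. -/

/-- `burnedSet G s φ t` is the set of vertices of `G` burned at time `t` in the firefighting
process where `s` is burned at time `0` and `φ t'` is the set of vertices protected at time
step `t'`: at each step the fire spreads from every burned vertex to each of its neighbors
that has not been protected at any time step so far. -/
def burnedSet {V : Type} (G : SimpleGraph V) (s : V) (φ : ℕ → Finset V) : ℕ → Set V
  | 0 => {s}
  | t + 1 => burnedSet G s φ t ∪
      {w | (∃ v ∈ burnedSet G s φ t, G.Adj v w) ∧ ∀ t' ≤ t + 1, w ∉ φ t'}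

/-- A strategy is valid with respect to budget `b` if no vertex is protected at time `0`,
at most `b` vertices are protected at each time step, and a vertex protected at time `t+1`
is not burned at time `t`. -/
def validStrategy {V : Type} (G : SimpleGraph V) (s : V) (b : ℕ) (φ : ℕ → Finset V) : Prop :=
  φ 0 = ∅ ∧ (∀ t, (φ t).card ≤ b) ∧ ∀ t v, v ∈ φ (t + 1) → v ∉ burnedSet G s φ t

/-- A vertex is saved if it is never burned. -/
def savedBy {V : Type} (G : SimpleGraph V) (s : V) (φ : ℕ → Finset V) (v : V) : Prop :=
  ∀ t, v ∉ burnedSet G s φ t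

open Finset

namespace SimpleGraph

variable {V : Type} {G : SimpleGraph V}

lemma card_neighborFinset_sdiff_add_card_le [DecidableEq V] [G.LocallyFinite] {u : V}
    {S T : Finset V} (hT : T ⊆ G.neighborFinset u ∩ S) :
    #(G.neighborFinset u \ S) + #T ≤ G.degree u := by
  rw [← card_neighborFinset_eq_degree, ← card_sdiff_add_card_inter (G.neighborFinset u) S]
  exact Nat.add_le_add_left (card_le_card hT) _

theorem IsAcyclic.length_le_of_isPath (hG : G.IsAcyclic) {u v : V} {p : G.Walk u v}
    (hp : p.IsPath) (q : G.Walk u v) : p.length ≤ q.length := by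
  classical
  have hpq : p = q.bypass :=
    congrArg Subtype.val ((hG.subsingleton_path u v).elim ⟨p, hp⟩ ⟨q.bypass, q.bypass_isPath⟩)
  exact hpq ▸ q.length_bypass_le_length

lemma exists_walk_length_le_of_mem_burnedSet {s w : V} {φ : ℕ → Finset V} {t : ℕ}
    (hw : w ∈ burnedSet G s φ t) : ∃ q : G.Walk s w, q.length ≤ t := by
  induction t generalizing w with
  | zero =>
    obtain rfl : w = s := hw
    exact ⟨Walk.nil, le_rfl⟩
  | succ t ih =>
    rcases hw with hw | ⟨⟨u, hu, huw⟩, -⟩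
    · obtain ⟨q, hq⟩ := ih hw
      exact ⟨q, by omega⟩
    · obtain ⟨q, hq⟩ := ih hu
      exact ⟨q.concat huw, by rw [Walk.length_concat]; omega⟩

namespace Walk

variable {s v : V}

/-- Past the end of `p`, `getVert` stays at `v`, so the off-path neighbours of `v` are protected
again at every later step. -/
def offPathStrategy [DecidableEq V] [G.LocallyFinite] (p : G.Walk s v) : ℕ → Finset V
  | 0 => ∅
  | i + 1 => G.neighborFinset (p.getVert i) \ p.support.toFinset

variable [DecidableEq V] [G.LocallyFinite] {p : G.Walk s v}

lemma offPathStrategy_succ (i : ℕ) :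
    p.offPathStrategy (i + 1) = G.neighborFinset (p.getVert i) \ p.support.toFinset :=
  rfl

lemma getVert_succ_mem_neighborFinset_inter_support {i : ℕ} (hi : i < p.length) :
    p.getVert (i + 1) ∈ G.neighborFinset (p.getVert i) ∩ p.support.toFinset := by
  simp [p.adj_getVert_succ hi, getVert_mem_support]

lemma getVert_pred_mem_neighborFinset_inter_support {i : ℕ} (h0 : 0 < i) (hi : i ≤ p.length) :
    p.getVert (i - 1) ∈ G.neighborFinset (p.getVert i) ∩ p.support.toFinset := by
  have hadj := p.adj_getVert_succ (i := i - 1) (by omega)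
  rw [Nat.sub_add_cancel h0] at hadj
  simp [hadj.symm, getVert_mem_support]

lemma IsPath.card_offPathStrategy_succ_add_two_le (hp : p.IsPath) {i : ℕ} (h0 : 0 < i)
    (hi : i < p.length) : #(p.offPathStrategy (i + 1)) + 2 ≤ G.degree (p.getVert i) := by
  have hne : p.getVert (i - 1) ≠ p.getVert (i + 1) := fun h => by
    have := hp.getVert_injOn (by simp only [Set.mem_ofPred_eq]; omega)
      (by simp only [Set.mem_ofPred_eq]; omega) h
    omega
  have hpair := card_neighborFinset_sdiff_add_card_le (S := p.support.toFinset)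
    (insert_subset (getVert_pred_mem_neighborFinset_inter_support h0 hi.le)
      (singleton_subset_iff.mpr (getVert_succ_mem_neighborFinset_inter_support hi)))
  rwa [card_pair hne] at hpair

lemma IsPath.card_offPathStrategy_le (hp : p.IsPath) {b : ℕ} (hmax : ∀ u, G.degree u ≤ b + 2)
    (hs : G.degree s ≤ b + 1) (hv : G.degree v ≤ b + 1) (hsv : s = v → G.degree s ≤ b) :
    ∀ t, #(p.offPathStrategy t) ≤ b
  | 0 => by simp [offPathStrategy]
  | i + 1 => by
    rcases Nat.eq_zero_or_pos p.length with hk | hk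
    · obtain rfl := p.eq_of_length_eq_zero hk
      have := card_neighborFinset_sdiff_add_card_le (G := G) (u := s) (S := p.support.toFinset)
        (empty_subset _)
      rw [offPathStrategy_succ, p.getVert_of_length_le (by omega)]
      simpa using this.trans (hsv rfl)
    rcases Nat.eq_zero_or_pos i with rfl | h0
    · have := card_neighborFinset_sdiff_add_card_le
        (singleton_subset_iff.mpr (getVert_succ_mem_neighborFinset_inter_support hk))
      rw [card_singleton, getVert_zero] at this
      rw [offPathStrategy_succ, getVert_zero]
      omega
    rcases lt_or_ge i p.length with hi | hi
    · have := hp.card_offPathStrategy_succ_add_two_le h0 hi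
      have := hmax (p.getVert i)
      omega
    · have := card_neighborFinset_sdiff_add_card_le (singleton_subset_iff.mpr
        (getVert_pred_mem_neighborFinset_inter_support (p := p) hk le_rfl))
      rw [card_singleton, getVert_length] at this
      rw [offPathStrategy_succ, p.getVert_of_length_le hi]
      omega

/-- In a forest the fire needs at least `j` steps to reach the `j`-th vertex of a path from `s`,
by which time the off-path neighbours of that vertex are protected. -/
lemma IsPath.burnedSet_offPathStrategy_subset_support (hG : G.IsAcyclic) (hp : p.IsPath)
    (t : ℕ) : burnedSet G s p.offPathStrategy t ⊆ {w | w ∈ p.support} := by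
  induction t with
  | zero =>
    intro w hw
    obtain rfl : w = s := hw
    exact p.start_mem_support
  | succ t ih =>
    rintro w (hw | ⟨⟨u, hu, huw⟩, hunprotected⟩)
    · exact ih hw
    obtain ⟨q, hq⟩ := exists_walk_length_le_of_mem_burnedSet hu
    obtain ⟨j, hju, hj⟩ := mem_support_iff_exists_getVert.mp (ih hu)
    have hjt : j ≤ t := by
      have := hG.length_le_of_isPath (hp.take j) (q.copy rfl hju.symm)
      rw [take_length, length_copy] at this
      omega
    by_contra hw
    exact hunprotected (j + 1) (by omega) (by simpa [offPathStrategy_succ, hju] using ⟨huw, hw⟩)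

end Walk

end SimpleGraph

open SimpleGraph Walk in
theorem stmt2_general {V : Type} [Fintype V] (G : SimpleGraph V) [DecidableRel G.Adj]
    (hG : G.IsTree) (s : V) (b : ℕ)
    (hmax : ∀ v, G.degree v ≤ b + 2) (hs : G.degree s ≤ b + 1)
    (hnotcomplete : ∃ v, ¬(G.degree v = 1 ∧ v ≠ s) ∧
      ((v = s ∧ G.degree v ≤ b) ∨ (v ≠ s ∧ G.degree v ≤ b + 1))) :
    ∃ φ : ℕ → Finset V, validStrategy G s b φ ∧
      ∀ v, G.degree v = 1 → v ≠ s → savedBy G s φ v := by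
  classical
  obtain ⟨v, hv_internal, hv_deg⟩ := hnotcomplete
  obtain ⟨p, hp, -⟩ := hG.existsUnique_path s v
  have hburnt := hp.burnedSet_offPathStrategy_subset_support hG.isAcyclic
  have hv : G.degree v ≤ b + 1 := by rcases hv_deg with ⟨rfl, h⟩ | ⟨-, h⟩ <;> omega
  have hsv : s = v → G.degree s ≤ b := by rintro rfl; tauto
  refine ⟨p.offPathStrategy, ⟨rfl, hp.card_offPathStrategy_le hmax hs hv hsv, ?_⟩, ?_⟩
  · intro t w hw hburn
    rw [offPathStrategy_succ, mem_sdiff, List.mem_toFinset] at hw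
    exact hw.2 (hburnt t hburn)
  · intro w hw hws t hburn
    obtain ⟨i, rfl, hi⟩ := mem_support_iff_exists_getVert.mp (hburnt t hburn)
    rcases Nat.eq_zero_or_pos i with rfl | h0
    · exact hws (getVert_zero p)
    rcases hi.lt_or_eq with hi | rfl
    · have := hp.card_offPathStrategy_succ_add_two_le h0 hi
      omega
    · rw [getVert_length] at hw hws
      exact hv_internal ⟨hw, hws⟩

/-- Let `b ≥ 2` and let `T` be a tree of maximum degree `b+2` rooted at a vertex `s` of
degree at most `b+1` (the leaves of `T` are its vertices of degree `1` other than `s`).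
If `T` is not complete — i.e. some internal (non-leaf) vertex is either the root with at
most `b` children (degree at most `b`) or a non-root vertex with at most `b` children
(degree at most `b+1`) — then there is a valid firefighting strategy with `b` firefighters
per time step, fire starting at `s`, saving all leaves of `T`. -/
theorem stmt2 {V : Type} [Fintype V] [DecidableEq V] (G : SimpleGraph V) [DecidableRel G.Adj]
    (hG : G.IsTree) (s : V) (b : ℕ) (hb : 2 ≤ b)
    (hmax : ∀ v, G.degree v ≤ b + 2) (hs : G.degree s ≤ b + 1)
    (hnotcomplete : ∃ v, ¬(G.degree v = 1 ∧ v ≠ s) ∧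
      ((v = s ∧ G.degree v ≤ b) ∨ (v ≠ s ∧ G.degree v ≤ b + 1))) :
    ∃ φ : ℕ → Finset V, validStrategy G s b φ ∧
      ∀ v, G.degree v = 1 → v ≠ s → savedBy G s φ v :=
  stmt2_general G hG s b hmax hs hnotcomplete
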